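/- arXiv:0901.2062 — 2 statements merged into one kernel-verified Lean document; each statement's English description precedes it below -/
import Mathlib

section
/- (Uniqueness of the simplex weight distribution.) Let m ≥ 1 and let C be an F₂-linear subspace of (Fin (2^m − 1) → ZMod 2) of dimension m such that every nonzero element of C has Hamming weight at least 2^(m-1). Then every nonzero element of C has Hamming weight exactly 2^(m-1); i.e. any binary linear [2^m − 1, m, 2^(m-1)] code has weight enumerator 1 + (2^m − 1)·t^(2^(m-1)) and is the simplex code. -/
/-! Plotkin's averaging argument. A linear functional on a binary code is either zero or
nonzero on exactly half of the codewords, so summing over the coordinates, the total weight of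
a code of length `n` with `2^m` codewords is at most `n 2^(m-1)`. For `n = 2^m - 1` this is
exactly `(2^m - 1) 2^(m-1)`, the least possible total weight of `2^m - 1` nonzero codewords
of weight at least `2^(m-1)`, so each of them has weight exactly `2^(m-1)`. -/

open Finset

theorem AddMonoidHom.two_mul_card_filter_ne_zero_le {G : Type*} [AddGroup G] [Fintype G]
    (f : G →+ ZMod 2) : 2 * #{g | f g ≠ 0} ≤ Fintype.card G := by
  obtain h | ⟨g₀, hg₀⟩ := (univ.filter fun g => f g ≠ 0).eq_empty_or_nonempty
  · simp [h]
  have eq_one {g : G} (hg : f g ≠ 0) : f g = 1 := Fin.eq_one_of_ne_zero _ hg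
  -- translation by `g₀` flips the value of `f`
  have hle : #{g | f g ≠ 0} ≤ #{g | ¬f g ≠ 0} := by
    refine card_le_card_of_injOn (· + g₀) (fun g hg => ?_) (add_left_injective g₀).injOn
    simp only [coe_filter, mem_univ, true_and, Set.mem_ofPred_eq, map_add, not_not] at hg ⊢
    rw [eq_one hg, eq_one (mem_filter.1 hg₀).2, CharTwo.add_self_eq_zero]
  have := card_filter_add_card_filter_not (s := univ) (fun g => f g ≠ 0)
  rw [card_univ] at this
  omega

theorem sum_hammingNorm_eq_sum_card_filter {α ι : Type*} [Fintype α] [Fintype ι] {β : ι → Type*}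
    [∀ i, Zero (β i)] [∀ i, DecidableEq (β i)] (v : α → ∀ i, β i) :
    ∑ a, hammingNorm (v a) = ∑ i, #{a | v a i ≠ 0} := by
  simp only [hammingNorm, card_filter]
  exact sum_comm

theorem AddSubgroup.two_mul_sum_hammingNorm_le {ι : Type*} [Fintype ι]
    (C : AddSubgroup (ι → ZMod 2)) [Fintype C] :
    2 * ∑ c : C, hammingNorm (c : ι → ZMod 2) ≤ Fintype.card ι * Fintype.card C := by
  rw [sum_hammingNorm_eq_sum_card_filter, mul_sum, ← smul_eq_mul, ← card_univ, ← sum_const]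
  exact sum_le_sum fun i _ =>
    ((Pi.evalAddMonoidHom (fun _ => ZMod 2) i).comp C.subtype).two_mul_card_filter_ne_zero_le

theorem AddSubgroup.hammingNorm_eq_of_card_mul_card_le {ι : Type*} [Fintype ι]
    (C : AddSubgroup (ι → ZMod 2)) (d : ℕ)
    (hmin : ∀ x ∈ C, x ≠ 0 → d ≤ hammingNorm x)
    (hcard : Fintype.card ι * Nat.card C ≤ 2 * ((Nat.card C - 1) * d)) :
    ∀ x ∈ C, x ≠ 0 → hammingNorm x = d := by
  have := Fintype.ofFinite C
  rw [Nat.card_eq_fintype_card] at hcard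
  have htotal := C.two_mul_sum_hammingNorm_le
  rw [← sum_erase (a := 0) _ (by simp)] at htotal
  have hle : ∑ c ∈ univ.erase (0 : C), hammingNorm (c : ι → ZMod 2) ≤
      ∑ _c ∈ univ.erase (0 : C), d := by
    rw [sum_const, card_erase_of_mem (mem_univ _), card_univ, smul_eq_mul]
    omega
  have hlow : ∀ c ∈ univ.erase (0 : C), d ≤ hammingNorm (c : ι → ZMod 2) := fun c hc =>
    hmin c c.2 (by simpa using (mem_erase.1 hc).1)
  intro x hx hx0
  exact ((sum_eq_sum_iff_of_le hlow).1 (le_antisymm (sum_le_sum hlow) hle) ⟨x, hx⟩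
    (by simpa using hx0)).symm

theorem simplex_weight_distribution_unique_general
    (m : ℕ)
    (C : Submodule (ZMod 2) (Fin (2 ^ m - 1) → ZMod 2))
    (hdim : Module.finrank (ZMod 2) C = m)
    (hmin : ∀ x ∈ C, x ≠ 0 → 2 ^ (m - 1) ≤ hammingNorm x) :
    ∀ x ∈ C, x ≠ 0 → hammingNorm x = 2 ^ (m - 1) := by
  have hcard : Nat.card C.toAddSubgroup = 2 ^ m :=
    (Module.natCard_eq_pow_finrank (K := ZMod 2) (V := C)).trans (by rw [Nat.card_zmod, hdim])
  refine C.toAddSubgroup.hammingNorm_eq_of_card_mul_card_le _ hmin (le_of_eq ?_)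
  rw [Fintype.card_fin, hcard]
  rcases m with _ | k
  · simp
  · rw [mul_left_comm, Nat.add_sub_cancel, ← pow_succ']

theorem simplex_weight_distribution_unique
    (m : ℕ) (hm : 1 ≤ m)
    (C : Submodule (ZMod 2) (Fin (2 ^ m - 1) → ZMod 2))
    (hdim : Module.finrank (ZMod 2) C = m)
    (hmin : ∀ x ∈ C, x ≠ 0 → 2 ^ (m - 1) ≤ hammingNorm x) :
    ∀ x ∈ C, x ≠ 0 → hammingNorm x = 2 ^ (m - 1) :=
  simplex_weight_distribution_unique_general m C hdim hmin
end

section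
/- Let m ≥ 1 and i ≥ 1 be integers with gcd(m, 2i) = 2·gcd(m, i). Then gcd(2^m − 1, 2^i + 1) = 2^(gcd(m, i)) + 1. -/
/-!
Let `d = gcd m i`. The hypothesis says that `2d ∣ m` while `i / d` is odd. Hence `2^d + 1` divides
`2^i + 1`, and also `2^(2d) - 1`, which divides `2^m - 1`. Conversely the gcd `g` divides `2^(2i) - 1`, so it divides
`gcd (2^m - 1) (2^(2i) - 1) = 2^(2d) - 1 = (2^d + 1)(2^d - 1)`; and `g` is coprime to `2^d - 1`,
a divisor of `2^i - 1`, because `2^i + 1` and `2^i - 1` are consecutive odd numbers.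
-/

namespace Nat

theorem pow_two_mul_sub_one (a n : ℕ) : a ^ (2 * n) - 1 = (a ^ n + 1) * (a ^ n - 1) := by
  rw [mul_comm, pow_mul, ← Nat.sq_sub_sq, one_pow]

theorem pow_add_one_dvd_pow_two_mul_sub_one (a n : ℕ) : a ^ n + 1 ∣ a ^ (2 * n) - 1 :=
  pow_two_mul_sub_one a n ▸ dvd_mul_right _ _

theorem pow_add_one_dvd_pow_mul_add_one (a n : ℕ) {k : ℕ} (hk : Odd k) :
    a ^ n + 1 ∣ a ^ (n * k) + 1 := by
  simpa only [one_pow, pow_mul] using hk.nat_add_dvd_pow_add_pow (a ^ n) 1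

theorem coprime_add_one_sub_one_of_even {b : ℕ} (hb : Even b) : Coprime (b + 1) (b - 1) := by
  obtain rfl | hb0 := eq_or_ne b 0
  · simp
  have hodd : Odd (b - 1) := Nat.Even.sub_odd (one_le_iff_ne_zero.mpr hb0) hb odd_one
  rw [show b + 1 = 2 + (b - 1) by omega, coprime_add_self_left]
  exact hodd.coprime_two_left

theorem odd_div_gcd_of_gcd_two_mul_eq {m n : ℕ} (hn : n ≠ 0)
    (h : gcd m (2 * n) = 2 * gcd m n) : Odd (n / gcd m n) := by
  have hd : 0 < gcd m n := gcd_pos_of_pos_right m (pos_of_ne_zero hn)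
  rw [← not_even_iff_odd]
  rintro ⟨c, hc⟩
  have h2n : 2 * gcd m n ∣ n := ⟨c, calc
    n = gcd m n * (n / gcd m n) := (Nat.mul_div_cancel' (gcd_dvd_right m n)).symm
    _ = 2 * gcd m n * c := by rw [hc]; ring⟩
  have h2m : 2 * gcd m n ∣ m := h ▸ gcd_dvd_left m (2 * n)
  have hle : 2 * gcd m n ≤ gcd m n := le_of_dvd hd (dvd_gcd h2m h2n)
  omega

end Nat

theorem gcd_pow_two_sub_one_pow_two_add_one_eq_general
    (m i : ℕ) (hi : 1 ≤ i)
    (h : Nat.gcd m (2 * i) = 2 * Nat.gcd m i) :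
    Nat.gcd (2 ^ m - 1) (2 ^ i + 1) = 2 ^ Nat.gcd m i + 1 := by
  set d := Nat.gcd m i
  have hdi : d ∣ i := Nat.gcd_dvd_right m i
  have h2dm : 2 * d ∣ m := h ▸ Nat.gcd_dvd_left m (2 * i)
  apply Nat.dvd_antisymm
  · have hg : Nat.gcd (2 ^ m - 1) (2 ^ i + 1) ∣ (2 ^ d + 1) * (2 ^ d - 1) := by
      rw [← Nat.pow_two_mul_sub_one, ← h, ← Nat.pow_sub_one_gcd_pow_sub_one]
      exact Nat.gcd_dvd_gcd_of_dvd_right _ (Nat.pow_add_one_dvd_pow_two_mul_sub_one 2 i)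
    have hcop : Nat.Coprime (2 ^ i + 1) (2 ^ i - 1) :=
      Nat.coprime_add_one_sub_one_of_even (even_two.pow_of_ne_zero (by omega))
    refine Nat.Coprime.dvd_of_dvd_mul_right ?_ hg
    exact (hcop.coprime_dvd_right (Nat.pow_sub_one_dvd_pow_sub_one 2 hdi)).coprime_dvd_left
      (Nat.gcd_dvd_right _ _)
  · refine Nat.dvd_gcd ((Nat.pow_add_one_dvd_pow_two_mul_sub_one 2 d).trans
      (Nat.pow_sub_one_dvd_pow_sub_one 2 h2dm)) ?_
    have := Nat.pow_add_one_dvd_pow_mul_add_one 2 d (Nat.odd_div_gcd_of_gcd_two_mul_eq (by omega) h)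
    rwa [Nat.mul_div_cancel' hdi] at this

theorem gcd_pow_two_sub_one_pow_two_add_one_eq
    (m i : ℕ) (hm : 1 ≤ m) (hi : 1 ≤ i)
    (h : Nat.gcd m (2 * i) = 2 * Nat.gcd m i) :
    Nat.gcd (2 ^ m - 1) (2 ^ i + 1) = 2 ^ Nat.gcd m i + 1 :=
  gcd_pow_two_sub_one_pow_two_add_one_eq_general m i hi h
end
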